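/- Let M ∈ A. (1) If N is a subobject of M or a quotient of M, then P(M ⊕ N) = P(M) as subspaces of P(A). (2) For every n ≥ 1, P(M^n) = P(M) as subspaces of P(A). -/

import Mathlib

set_option maxHeartbeats 1000000
set_option synthInstance.maxHeartbeats 400000

open CategoryTheory CategoryTheory.Limits Module TensorProduct

universe v u

attribute [local instance] CategoryTheory.Abelian.hasFiniteBiproducts

/-- A fiber functor on a `ℚ`-linear Abelian category, defined over a field `F ⊇ ℚ`:
a `ℚ`-linear, exact, faithful functor into finite-dimensional `F`-vector spaces. -/
structure FiberFunctor (A : Type u) [Category.{v} A] [Abelian A] [CategoryTheory.Linear ℚ A]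
    (F : Type) [Field F] [Algebra ℚ F] where
  H : A ⥤ ModuleCat.{0} F
  additive : H.Additive
  linear : ∀ (q : ℚ) {M N : A} (f : M ⟶ N), H.map (q • f) = (algebraMap ℚ F q) • H.map f
  exact_left : Limits.PreservesFiniteLimits H
  exact_right : Limits.PreservesFiniteColimits H
  faithful : H.Faithful
  finDim : ∀ M : A, FiniteDimensional F (H.obj M)

variable (A : Type u) [Category.{v} A] [Abelian A] [CategoryTheory.Linear ℚ A]
variable (K : Subfield ℂ)
variable (HB : FiberFunctor A ℚ) (HdR : FiberFunctor A ↥K)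

/-- The index type of the free module on symbols `(M, σ, ω)`. -/
abbrev PIdx := Σ M : A, (HB.H.obj M) × Module.Dual ↥K (HdR.H.obj M)

/-- The free `K`-module on symbols `(M, σ, ω)`. -/
abbrev FreeMod := PIdx A K HB HdR →₀ ↥K

/-- Generators of the relations defining `P(A)` as a quotient of the free `K`-module on
symbols `(σ ⊗ ω)_M`: bilinearity relations (making the quotient by them the direct sum
`⊕_M H_B(M) ⊗_ℚ H_dR(M)^∨`) together with the period relations
`(σ ⊗ α^∨(ω))_M = (α(σ) ⊗ ω)_N` for morphisms `α : M ⟶ N`. -/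
def RelGen (x : FreeMod A K HB HdR) : Prop :=
  (∃ (M : A) (σ σ' : HB.H.obj M) (ω : Module.Dual ↥K (HdR.H.obj M)),
      x = Finsupp.single ⟨M, (σ + σ', ω)⟩ 1 - Finsupp.single ⟨M, (σ, ω)⟩ 1
            - Finsupp.single ⟨M, (σ', ω)⟩ 1) ∨
  (∃ (M : A) (σ : HB.H.obj M) (ω ω' : Module.Dual ↥K (HdR.H.obj M)),
      x = Finsupp.single ⟨M, (σ, ω + ω')⟩ 1 - Finsupp.single ⟨M, (σ, ω)⟩ 1
            - Finsupp.single ⟨M, (σ, ω')⟩ 1) ∨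
  (∃ (M : A) (q : ℚ) (σ : HB.H.obj M) (ω : Module.Dual ↥K (HdR.H.obj M)),
      x = Finsupp.single ⟨M, (q • σ, ω)⟩ 1 - Finsupp.single ⟨M, (σ, ω)⟩ (algebraMap ℚ ↥K q)) ∨
  (∃ (M : A) (c : ↥K) (σ : HB.H.obj M) (ω : Module.Dual ↥K (HdR.H.obj M)),
      x = Finsupp.single ⟨M, (σ, c • ω)⟩ 1 - Finsupp.single ⟨M, (σ, ω)⟩ c) ∨
  (∃ (M N : A) (α : M ⟶ N) (σ : HB.H.obj M) (ω : Module.Dual ↥K (HdR.H.obj N)),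
      x = Finsupp.single ⟨M, (σ, ω.comp (HdR.H.map α).hom)⟩ 1
            - Finsupp.single ⟨N, (HB.H.map α σ, ω)⟩ 1)

/-- The submodule of relations defining `P(A)`. -/
noncomputable def PRel : Submodule ↥K (FreeMod A K HB HdR) :=
  Submodule.span ↥K {x | RelGen A K HB HdR x}

/-- The space of formal periods `P(A)`. -/
abbrev PA := FreeMod A K HB HdR ⧸ PRel A K HB HdR

/-- The class of the formal period `(σ ⊗ ω)_M` in `P(A)`. -/
noncomputable def per (M : A) (σ : HB.H.obj M) (ω : Module.Dual ↥K (HdR.H.obj M)) :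
    PA A K HB HdR :=
  Submodule.Quotient.mk (Finsupp.single ⟨M, (σ, ω)⟩ 1)

/-- `P(M)`: the image of `H_B(M) ⊗_ℚ H_dR(M)^∨` in `P(A)`. -/
noncomputable def PM (M : A) : Submodule ↥K (PA A K HB HdR) :=
  Submodule.span ↥K {x | ∃ σ ω, x = per A K HB HdR M σ ω}

/-- The `m`-th power `M^m` of an object. -/
noncomputable abbrev pow (M : A) (m : ℕ) : A := ⨁ (fun _ : Fin m => M)

/-- The free `K`-module on symbols `σ ⊗ ω` for a single object `M`,
of which `H_B(M) ⊗_ℚ H_dR(M)^∨` is the quotient by the bilinearity relations. -/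
abbrev FreeModM (M : A) := ((HB.H.obj M) × Module.Dual ↥K (HdR.H.obj M)) →₀ ↥K

/-- Generators of the relations defining `P^k(M)` (`k ∈ ℕ ∪ {∞}`, encoded as `k : ℕ∞`):
bilinearity relations together with the depth `≤ k` relations `∑_{i=1}^m σ_i ⊗ ω_i = 0`
for every exact sequence `0 → N' → M^m → N → 0` with `m ≤ k`, `(σ_i) ∈ H_B(N')` and
`(ω_i) ∈ H_dR(N)^∨`. -/
def RelGenDepth (M : A) (k : ℕ∞) (x : FreeModM A K HB HdR M) : Prop :=
  (∃ (σ σ' : HB.H.obj M) (ω : Module.Dual ↥K (HdR.H.obj M)),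
      x = Finsupp.single (σ + σ', ω) 1 - Finsupp.single (σ, ω) 1 - Finsupp.single (σ', ω) 1) ∨
  (∃ (σ : HB.H.obj M) (ω ω' : Module.Dual ↥K (HdR.H.obj M)),
      x = Finsupp.single (σ, ω + ω') 1 - Finsupp.single (σ, ω) 1 - Finsupp.single (σ, ω') 1) ∨
  (∃ (q : ℚ) (σ : HB.H.obj M) (ω : Module.Dual ↥K (HdR.H.obj M)),
      x = Finsupp.single (q • σ, ω) 1 - Finsupp.single (σ, ω) (algebraMap ℚ ↥K q)) ∨
  (∃ (c : ↥K) (σ : HB.H.obj M) (ω : Module.Dual ↥K (HdR.H.obj M)),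
      x = Finsupp.single (σ, c • ω) 1 - Finsupp.single (σ, ω) c) ∨
  (∃ (m : ℕ), 1 ≤ m ∧ (m : ℕ∞) ≤ k ∧
    ∃ (N' N : A) (f : N' ⟶ pow A M m) (g : pow A M m ⟶ N) (w : f ≫ g = 0),
      (ShortComplex.mk f g w).ShortExact ∧
      ∃ (s : HB.H.obj N') (ω' : Module.Dual ↥K (HdR.H.obj N)),
        x = ∑ j : Fin m,
          Finsupp.single
            (HB.H.map (f ≫ biproduct.π (fun _ : Fin m => M) j) s,
             ω'.comp (HdR.H.map (biproduct.ι (fun _ : Fin m => M) j ≫ g)).hom) 1)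

/-- The submodule of relations defining `P^k(M)`. -/
noncomputable def PRelDepth (M : A) (k : ℕ∞) : Submodule ↥K (FreeModM A K HB HdR M) :=
  Submodule.span ↥K {x | RelGenDepth A K HB HdR M k x}

/-- The space `P^k(M)` of formal periods of depth `k` of `M`; `P^∞(M)` is `PkM M ⊤`. -/
abbrev PkM (M : A) (k : ℕ∞) := FreeModM A K HB HdR M ⧸ PRelDepth A K HB HdR M k

/-- The canonical map from the free module on symbols `σ ⊗ ω` at `M` to the one on all
symbols `(σ ⊗ ω)_N`, inducing the canonical map `P^∞(M) → P(A)`. -/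
noncomputable def toFree (M : A) : FreeModM A K HB HdR M →ₗ[↥K] FreeMod A K HB HdR :=
  Finsupp.lmapDomain ↥K ↥K (fun t => (⟨M, t⟩ : PIdx A K HB HdR))


/-!
The period relation moves `α` between the two sides of a symbol:
`(α(τ) ⊗ ω)_Y = (τ ⊗ α^∨(ω))_X ∈ P(X)`. Hence a monomorphism `α : X ⟶ Y` gives `P(X) ⊆ P(Y)`
(exactness makes `H_dR(α)^∨` surjective) and an epimorphism gives `P(Y) ⊆ P(X)` (exactness makes
`H_B(α)` surjective). If `𝟙_Y = ∑ p_j ≫ i_j` through objects `X_j`, every `σ ∈ H_B(Y)` is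
`∑ i_j(p_j(σ))`, so `P(Y) ⊆ ∑ P(X_j)`; applied to `M ⊞ N` and `M^n` this gives `⊆`, and the
split monomorphism `M ⟶ M ⊞ N` (resp. `M ⟶ M^n`) gives `⊇`.
-/
lemma CategoryTheory.Functor.eq_sum_map_of_sum_comp_eq_id {C : Type*} [Category C]
    [Preadditive C] {R : Type*} [Ring R] (F : C ⥤ ModuleCat R) [F.Additive]
    {ι : Type*} [Fintype ι] {X : ι → C} {Y : C} (p : ∀ j, Y ⟶ X j) (i : ∀ j, X j ⟶ Y)
    (h : ∑ j, p j ≫ i j = 𝟙 Y) (σ : F.obj Y) :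
    σ = ∑ j, F.map (i j) (F.map (p j) σ) := by
  conv_lhs => rw [← ModuleCat.id_apply (F.obj Y) σ, ← F.map_id, ← h]
  simp only [F.map_sum, F.map_comp, ModuleCat.hom_sum, LinearMap.sum_apply,
    ModuleCat.hom_comp, LinearMap.comp_apply]

section Periods

attribute [local instance] FiberFunctor.additive FiberFunctor.exact_left FiberFunctor.exact_right

variable {A K HB HdR}

lemma per_comp_map {X Y : A} (α : X ⟶ Y) (σ : HB.H.obj X)
    (ω : Module.Dual ↥K (HdR.H.obj Y)) :
    per A K HB HdR X σ (ω.comp (HdR.H.map α).hom) = per A K HB HdR Y (HB.H.map α σ) ω :=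
  (Submodule.Quotient.eq _).mpr <| Submodule.subset_span <|
    Or.inr <| Or.inr <| Or.inr <| Or.inr ⟨X, Y, α, σ, ω, rfl⟩

lemma per_add_left {X : A} (σ σ' : HB.H.obj X) (ω : Module.Dual ↥K (HdR.H.obj X)) :
    per A K HB HdR X (σ + σ') ω = per A K HB HdR X σ ω + per A K HB HdR X σ' ω := by
  rw [← sub_eq_zero, ← sub_sub]
  simp only [per, ← Submodule.Quotient.mk_sub, Submodule.Quotient.mk_eq_zero]
  exact Submodule.subset_span (Or.inl ⟨X, σ, σ', ω, rfl⟩)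

noncomputable def perAddHom (X : A) (ω : Module.Dual ↥K (HdR.H.obj X)) :
    HB.H.obj X →+ PA A K HB HdR :=
  AddMonoidHom.mk' (per A K HB HdR X · ω) fun σ σ' => per_add_left σ σ' ω

lemma per_sum {X : A} {ι : Type*} (s : Finset ι) (σ : ι → HB.H.obj X)
    (ω : Module.Dual ↥K (HdR.H.obj X)) :
    per A K HB HdR X (∑ j ∈ s, σ j) ω = ∑ j ∈ s, per A K HB HdR X (σ j) ω :=
  map_sum (perAddHom X ω) σ s

lemma per_mem_PM {X : A} (σ : HB.H.obj X) (ω : Module.Dual ↥K (HdR.H.obj X)) :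
    per A K HB HdR X σ ω ∈ PM A K HB HdR X :=
  Submodule.subset_span ⟨σ, ω, rfl⟩

lemma per_map_mem_PM {X Y : A} (α : X ⟶ Y) (τ : HB.H.obj X) (ω : Module.Dual ↥K (HdR.H.obj Y)) :
    per A K HB HdR Y (HB.H.map α τ) ω ∈ PM A K HB HdR X :=
  per_comp_map α τ ω ▸ per_mem_PM τ _

lemma PM_le_of_mono {X Y : A} (α : X ⟶ Y) [Mono α] :
    PM A K HB HdR X ≤ PM A K HB HdR Y := by
  rw [PM, Submodule.span_le]
  rintro _ ⟨σ, ω, rfl⟩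
  have hinj : Function.Injective (HdR.H.map α) :=
    (ModuleCat.mono_iff_injective _).mp inferInstance
  obtain ⟨ω', rfl⟩ := LinearMap.dualMap_surjective_of_injective hinj ω
  exact per_comp_map α σ ω' ▸ per_mem_PM _ _

lemma PM_le_of_epi {X Y : A} (α : X ⟶ Y) [Epi α] :
    PM A K HB HdR Y ≤ PM A K HB HdR X := by
  rw [PM, Submodule.span_le]
  rintro _ ⟨σ, ω, rfl⟩
  obtain ⟨τ, rfl⟩ := (ModuleCat.epi_iff_surjective (HB.H.map α)).mp inferInstance σ
  exact per_map_mem_PM α τ ω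

lemma PM_le_iSup_of_sum_comp_eq_id {ι : Type*} [Fintype ι] {X : ι → A} {Y : A}
    (p : ∀ j, Y ⟶ X j) (i : ∀ j, X j ⟶ Y) (h : ∑ j, p j ≫ i j = 𝟙 Y) :
    PM A K HB HdR Y ≤ ⨆ j, PM A K HB HdR (X j) := by
  rw [PM, Submodule.span_le]
  rintro _ ⟨σ, ω, rfl⟩
  rw [HB.H.eq_sum_map_of_sum_comp_eq_id p i h σ, per_sum]
  exact Submodule.sum_mem _ fun j _ => Submodule.mem_iSup_of_mem j (per_map_mem_PM (i j) _ ω)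

lemma PM_biproduct_le {ι : Type} [Fintype ι] (X : ι → A) :
    PM A K HB HdR (⨁ X) ≤ ⨆ j, PM A K HB HdR (X j) :=
  PM_le_iSup_of_sum_comp_eq_id (biproduct.π X) (biproduct.ι X) biproduct.total

lemma PM_biprod_le (X Y : A) :
    PM A K HB HdR (X ⊞ Y) ≤ PM A K HB HdR X ⊔ PM A K HB HdR Y := by
  have h := PM_le_iSup_of_sum_comp_eq_id (HB := HB) (HdR := HdR) (X := fun b => cond b X Y)
    (fun | true => biprod.fst | false => biprod.snd)
    (fun | true => biprod.inl | false => biprod.inr) (by simp [biprod.total])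
  rwa [iSup_bool_eq] at h

lemma PM_biprod_eq_of_le {X Y : A} (h : PM A K HB HdR Y ≤ PM A K HB HdR X) :
    PM A K HB HdR (X ⊞ Y) = PM A K HB HdR X :=
  le_antisymm ((PM_biprod_le X Y).trans (sup_le le_rfl h)) (PM_le_of_mono biprod.inl)

lemma PM_pow {X : A} {n : ℕ} (hn : 1 ≤ n) : PM A K HB HdR (pow A X n) = PM A K HB HdR X :=
  le_antisymm ((PM_biproduct_le _).trans (iSup_le fun _ => le_rfl))
    (PM_le_of_mono (biproduct.ι (fun _ : Fin n => X) ⟨0, hn⟩))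

end Periods

/-- **Proposition (`PROPBASICPROP` 1 & 2).** If `N` is a subobject or a quotient of `M`,
then `P(M ⊕ N) = P(M)` as subspaces of `P(A)`; and `P(M^n) = P(M)` for all `n ≥ 1`. -/
theorem PM_biprod_and_pow (M : A) :
    (∀ (N : A) (f : N ⟶ M), Mono f →
        PM A K HB HdR (M ⊞ N) = PM A K HB HdR M) ∧
    (∀ (N : A) (g : M ⟶ N), Epi g →
        PM A K HB HdR (M ⊞ N) = PM A K HB HdR M) ∧
    (∀ n : ℕ, 1 ≤ n → PM A K HB HdR (pow A M n) = PM A K HB HdR M) :=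
  ⟨fun _ f _ => PM_biprod_eq_of_le (PM_le_of_mono f),
    fun _ g _ => PM_biprod_eq_of_le (PM_le_of_epi g),
    fun _ hn => PM_pow hn⟩
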